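/- arXiv:2106.05770 — 2 statements merged into one kernel-verified Lean document; each statement's English description precedes it below -/
import Mathlib

section
/- Let z0 ∈ ℂ and let B, X, A be functions of a complex variable such that: B is analytic at z0 with B(z0) = z0; X is analytic at z0 and nonconstant near z0, with d ≥ 1 the order of vanishing of X − X(z0) at z0; A is analytic at X(z0); and A(X(z)) = X(B(z)) for all z in some neighborhood of z0. Then X(z0) is a fixed point of A, i.e., A(X(z0)) = X(z0), and its multiplier satisfies A′(X(z0)) = (B′(z0))^d. -/
open Polynomial Filter

/-- The `l`-th compositional iterate of a polynomial (the 0-th iterate is `X`). -/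
noncomputable def polyIter (A : Polynomial ℂ) : ℕ → Polynomial ℂ
  | 0 => Polynomial.X
  | n + 1 => A.comp (polyIter A n)

/-- A polynomial `A` of degree `n` is special if there is a degree-one polynomial `σ`
(with compositional inverse `τ`) such that `σ ∘ A ∘ σ⁻¹` equals `z^n`, `T_n` or `-T_n`. -/
def IsSpecialPoly (A : Polynomial ℂ) : Prop :=
  ∃ σ τ : Polynomial ℂ, σ.degree = 1 ∧ σ.comp τ = Polynomial.X ∧ τ.comp σ = Polynomial.X ∧
    (σ.comp (A.comp τ) = Polynomial.X ^ A.natDegree ∨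
     σ.comp (A.comp τ) = Polynomial.Chebyshev.T ℂ (A.natDegree : ℤ) ∨
     σ.comp (A.comp τ) = -Polynomial.Chebyshev.T ℂ (A.natDegree : ℤ))

/-- A Poincaré function for `(A, z0, lam)`: an entire function `P` with `P 0 = z0`,
`P' 0 ≠ 0` and `P (lam * z) = A (P z)` for all `z`. -/
def IsPoincare (A : Polynomial ℂ) (z0 lam : ℂ) (P : ℂ → ℂ) : Prop :=
  Differentiable ℂ P ∧ P 0 = z0 ∧ deriv P 0 ≠ 0 ∧ ∀ z : ℂ, P (lam * z) = A.eval (P z)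

/-- The order of vanishing of `X - X(z0)` at `z0`. -/
noncomputable def polyOrd (X : Polynomial ℂ) (z0 : ℂ) : ℕ :=
  Polynomial.rootMultiplicity z0 (X - Polynomial.C (X.eval z0))

/-- A Böttcher function for a polynomial `A` of degree `n ≥ 2`: a function holomorphic on
`|z| > R` for some `R > 0`, with `B z / z` tending to a nonzero finite limit at infinity,
satisfying `B (z^n) = A (B z)` for `|z| > R`. -/
def IsBoettcher (A : Polynomial ℂ) (B : ℂ → ℂ) : Prop :=
  ∃ R : ℝ, 0 < R ∧ (∀ z : ℂ, R < ‖z‖ → AnalyticAt ℂ B z) ∧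
    (∃ c : ℂ, c ≠ 0 ∧ Filter.Tendsto (fun z => B z / z) (Bornology.cobounded ℂ) (nhds c)) ∧
    ∀ z : ℂ, R < ‖z‖ → B (z ^ A.natDegree) = A.eval (B z)

/-! Write `X z - X z₀ = (z - z₀)^d g(z)` with `g z₀ ≠ 0`, and `A w - A (X z₀) = (w - X z₀) a(w)`,
`B z - z₀ = (z - z₀) b(z)` with the slopes `a, b` continuous at the base points with values
`A'(X z₀)`, `B'(z₀)`. The semiconjugacy `A ∘ X = X ∘ B` becomes
`(z - z₀)^d g(z) a(X z) = (z - z₀)^d b(z)^d g(B z)`; cancel `(z - z₀)^d` off `z₀` and let `z → z₀`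
to get `g(z₀) A'(X z₀) = B'(z₀)^d g(z₀)`. -/

open Topology

section Order

variable {𝕜 E : Type*} [NontriviallyNormedField 𝕜] [CharZero 𝕜] [NormedAddCommGroup E]
  [NormedSpace 𝕜 E] [CompleteSpace E]

theorem AnalyticAt.analyticOrderAt_sub_eq_of_iteratedDeriv {f : 𝕜 → E} {z₀ : 𝕜} {d : ℕ}
    (hf : AnalyticAt 𝕜 f z₀) (hd : 1 ≤ d) (hne : iteratedDeriv d f z₀ ≠ 0)
    (hzero : ∀ k, 0 < k → k < d → iteratedDeriv k f z₀ = 0) :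
    analyticOrderAt (fun z => f z - f z₀) z₀ = d := by
  have hshift : ∀ k, 0 < k → iteratedDeriv k (fun z => f z - f z₀) z₀ = iteratedDeriv k f z₀ := by
    intro k hk
    simpa only [neg_add_eq_sub] using iteratedDeriv_const_add (f := f) (x := z₀) hk (-f z₀)
  rw [analyticOrderAt_eq_nat_iff_iteratedDeriv_eq_zero (hf.fun_sub analyticAt_const)]
  refine ⟨fun k hk => ?_, hshift d hd ▸ hne⟩
  rcases Nat.eq_zero_or_pos k with rfl | hk0
  · simp
  · rw [hshift k hk0, hzero k hk0 hk]

end Order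

section Semiconjugacy

variable {𝕜 : Type*} [NontriviallyNormedField 𝕜] {A X B : 𝕜 → 𝕜} {z₀ : 𝕜}

theorem apply_eq_self_of_eventually_semiconj (hBfix : B z₀ = z₀)
    (hsemi : ∀ᶠ z in 𝓝 z₀, A (X z) = X (B z)) : A (X z₀) = X z₀ := by
  simpa only [hBfix] using hsemi.self_of_nhds

theorem deriv_eq_deriv_pow_of_eventually_semiconj {g : 𝕜 → 𝕜} {d : ℕ}
    (hB : DifferentiableAt 𝕜 B z₀) (hBfix : B z₀ = z₀) (hA : DifferentiableAt 𝕜 A (X z₀))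
    (hX : ContinuousAt X z₀) (hg : ContinuousAt g z₀) (hg0 : g z₀ ≠ 0)
    (hXg : ∀ᶠ z in 𝓝 z₀, X z - X z₀ = (z - z₀) ^ d * g z)
    (hsemi : ∀ᶠ z in 𝓝 z₀, A (X z) = X (B z)) :
    deriv A (X z₀) = deriv B z₀ ^ d := by
  have hfix := apply_eq_self_of_eventually_semiconj hBfix hsemi
  have hBt : Tendsto B (𝓝 z₀) (𝓝 z₀) := by
    simpa only [hBfix] using hB.continuousAt.tendsto
  have hexpand : ∀ᶠ z in 𝓝 z₀, (z - z₀) ^ d * (g z * dslope A (X z₀) (X z)) =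
      (z - z₀) ^ d * (dslope B z₀ z ^ d * g (B z)) := by
    filter_upwards [hsemi, hXg, hBt.eventually hXg] with z hz hXz hXBz
    have hBz : B z - z₀ = (z - z₀) * dslope B z₀ z := by
      simpa only [hBfix, smul_eq_mul] using (sub_smul_dslope B z₀ z).symm
    calc (z - z₀) ^ d * (g z * dslope A (X z₀) (X z))
        = (X z - X z₀) * dslope A (X z₀) (X z) := by rw [hXz]; ring
      _ = A (X z) - A (X z₀) := by rw [← smul_eq_mul, sub_smul_dslope]
      _ = X (B z) - X z₀ := by rw [hz, hfix]
      _ = (z - z₀) ^ d * (dslope B z₀ z ^ d * g (B z)) := by rw [hXBz, hBz, mul_pow]; ring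
  have hcancel : (fun z => g z * dslope A (X z₀) (X z)) =ᶠ[𝓝[≠] z₀]
      fun z => dslope B z₀ z ^ d * g (B z) := by
    filter_upwards [nhdsWithin_le_nhds hexpand, self_mem_nhdsWithin] with z hz hne
    exact mul_left_cancel₀ (pow_ne_zero d (sub_ne_zero.mpr hne)) hz
  have hLeft : ContinuousAt (fun z => g z * dslope A (X z₀) (X z)) z₀ :=
    hg.mul ((continuousAt_dslope_same.mpr hA).comp hX)
  have hRight : ContinuousAt (fun z => dslope B z₀ z ^ d * g (B z)) z₀ :=
    ((continuousAt_dslope_same.mpr hB).pow d).mul ((hBfix ▸ hg).comp hB.continuousAt)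
  have hlim : g z₀ * dslope A (X z₀) (X z₀) = dslope B z₀ z₀ ^ d * g (B z₀) :=
    ((hLeft.eventuallyEq_nhds_iff_eventuallyEq_nhdsNE hRight).mp hcancel).eq_of_nhds
  rw [dslope_same, dslope_same, hBfix, mul_comm] at hlim
  exact mul_right_cancel₀ hg0 hlim

end Semiconjugacy

theorem stmt16 (z0 : ℂ) (A X B : ℂ → ℂ)
    (hB : AnalyticAt ℂ B z0) (hBfix : B z0 = z0)
    (hX : AnalyticAt ℂ X z0)
    (d : ℕ) (hd : 1 ≤ d)
    (hord : iteratedDeriv d X z0 ≠ 0)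
    (hord' : ∀ k : ℕ, 0 < k → k < d → iteratedDeriv k X z0 = 0)
    (hA : AnalyticAt ℂ A (X z0))
    (hsemi : ∀ᶠ z in nhds z0, A (X z) = X (B z)) :
    A (X z0) = X z0 ∧ deriv A (X z0) = (deriv B z0) ^ d := by
  obtain ⟨g, hg, hg0, hXg⟩ := (hX.fun_sub analyticAt_const).analyticOrderAt_eq_natCast.mp
    (hX.analyticOrderAt_sub_eq_of_iteratedDeriv hd hord hord')
  refine ⟨apply_eq_self_of_eventually_semiconj hBfix hsemi, ?_⟩
  exact deriv_eq_deriv_pow_of_eventually_semiconj hB.differentiableAt hBfix hA.differentiableAt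
    hX.continuousAt hg.continuousAt hg0 (by simpa only [smul_eq_mul] using hXg) hsemi
end

section
/- Let A, B be polynomials over ℂ of degree at least two and X a nonconstant polynomial such that A ∘ X = X ∘ B. Let z0 be a repelling fixed point of B with multiplier λ0 = B′(z0), |λ0| > 1, and let 𝓟_B be a Poincaré function for (B, z0, λ0). Set d = ord_{z0} X, z1 = X(z0), and λ1 = λ0^d. Then z1 is a repelling fixed point of A with multiplier λ1, and there exists a Poincaré function 𝓟_A for (A, z1, λ1) such that X(𝓟_B(z)) = 𝓟_A(z^d) for all z ∈ ℂ. -/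
open Polynomial Filter

/-!
`Q := X ∘ 𝓟_B` is entire, satisfies `Q (λ₀ z) = A (Q z)`, and `Q - z₁` vanishes to order `d` at `0`.
Comparing lowest-order terms in `Q (λ₀ z) - z₁ = A (Q z) - A z₁` gives `A'(z₁) = λ₀ ^ d`. More
generally, if two solutions of `F (λ₀ w) = A (F w)` agree at `0`, the order `m` of their difference
satisfies `λ₀ ^ m = A'(z₁) = λ₀ ^ d`, so `m = d` since `|λ₀| > 1`. For a primitive `d`-th root of
unity `ζ`, `Q (ζ ·)` is such a solution and `Q (ζ ·) - Q` vanishes to order `> d`, so `Q (ζ ·) = Q`.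
Then only the Taylor coefficients `a_n` of `Q` with `d ∣ n` survive, and `𝓟_A w = ∑ a_{dk} w ^ k`.
-/

open Polynomial Filter Topology

namespace Polynomial

variable {R : Type*} [CommRing R]

/-- The divided difference `(p x - p y) / (x - y)`, written as a polynomial expression in `x, y`
so that it is jointly continuous and equals `p' x` on the diagonal. -/
noncomputable def divDiff (p : R[X]) (x y : R) : R :=
  ∑ i ∈ Finset.range (p.natDegree + 1), p.coeff i * ∑ j ∈ Finset.range i, x ^ j * y ^ (i - 1 - j)

theorem sub_mul_divDiff (p : R[X]) (x y : R) : (x - y) * p.divDiff x y = p.eval x - p.eval y := by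
  rw [divDiff, Finset.mul_sum, eval_eq_sum_range x, eval_eq_sum_range y, ← Finset.sum_sub_distrib]
  refine Finset.sum_congr rfl fun i _ => ?_
  rw [mul_left_comm, mul_comm (x - y), geom_sum₂_mul, mul_sub]

theorem divDiff_self (p : R[X]) (x : R) : p.divDiff x x = p.derivative.eval x := by
  rw [derivative_eval, p.sum_over_range (by simp), divDiff]
  refine Finset.sum_congr rfl fun i _ => ?_
  have hpow : ∀ j ∈ Finset.range i, x ^ j * x ^ (i - 1 - j) = x ^ (i - 1) := fun j hj => by
    rw [← pow_add]
    congr 1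
    have := Finset.mem_range.1 hj
    omega
  rw [Finset.sum_congr rfl hpow, Finset.sum_const, Finset.card_range, nsmul_eq_mul, mul_assoc]

theorem continuous_divDiff [TopologicalSpace R] [IsTopologicalRing R] (p : R[X]) :
    Continuous fun z : R × R => p.divDiff z.1 z.2 := by
  unfold divDiff
  fun_prop

theorem sub_C_eval_ne_zero {p : R[X]} (hp : 0 < p.natDegree) (a : R) : p - C (p.eval a) ≠ 0 :=
  fun h => by rw [← natDegree_sub_C (a := p.eval a), h, natDegree_zero] at hp; exact hp.false

section NormedField

variable {𝕜 : Type*} [NontriviallyNormedField 𝕜]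

theorem analyticAt_eval (p : 𝕜[X]) (a : 𝕜) : AnalyticAt 𝕜 (fun z => p.eval z) a := by
  simpa using (analyticAt_id (z := a)).aeval_polynomial p

theorem analyticOrderAt_eval {p : 𝕜[X]} (hp : p ≠ 0) (a : 𝕜) :
    analyticOrderAt (fun z => p.eval z) a = p.rootMultiplicity a := by
  rw [(p.analyticAt_eval a).analyticOrderAt_eq_natCast]
  refine ⟨fun z => (p /ₘ (X - C a) ^ p.rootMultiplicity a).eval z, (analyticAt_eval _ a),
    eval_divByMonic_pow_rootMultiplicity_ne_zero a hp, Eventually.of_forall fun z => ?_⟩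
  conv_lhs => rw [← pow_mul_divByMonic_rootMultiplicity_eq p a]
  simp

end NormedField

end Polynomial

/-- Writing `F w - G w = w ^ m k w` with `k 0 ≠ 0`, the functional equations give
`λ ^ m k (λ w) = k w · A[F w, G w]`, whose value at `w = 0` is `λ ^ m k 0 = k 0 · A'(F 0)`. -/
theorem pow_eq_derivative_eval_of_analyticOrderAt_sub {𝕜 : Type*} [NontriviallyNormedField 𝕜]
    {A : 𝕜[X]} {F G : 𝕜 → 𝕜} {lam : 𝕜} {m : ℕ}
    (hH : AnalyticAt 𝕜 (fun w => F w - G w) 0) (hF : ContinuousAt F 0) (hG : ContinuousAt G 0)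
    (hFG : F 0 = G 0) (hFA : ∀ w, F (lam * w) = A.eval (F w))
    (hGA : ∀ w, G (lam * w) = A.eval (G w))
    (hm : analyticOrderAt (fun w => F w - G w) 0 = m) :
    lam ^ m = A.derivative.eval (F 0) := by
  obtain ⟨k, hk, hk0, hHk⟩ := hH.analyticOrderAt_eq_natCast.1 hm
  simp only [sub_zero, smul_eq_mul] at hHk
  have hE : ContinuousAt (fun w => A.divDiff (F w) (G w)) 0 :=
    ContinuousAt.comp (g := fun z : 𝕜 × 𝕜 => A.divDiff z.1 z.2) (f := fun w => (F w, G w))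
      A.continuous_divDiff.continuousAt (hF.prodMk hG)
  have hlam : Tendsto (lam * ·) (𝓝 0) (𝓝 0) := by
    simpa using (continuous_const_mul lam).tendsto 0
  have hrec : ∀ w, F (lam * w) - G (lam * w) = (F w - G w) * A.divDiff (F w) (G w) := fun w => by
    rw [hFA, hGA, ← A.sub_mul_divDiff]
  have hlimit : ∀ᶠ w in 𝓝[≠] 0, lam ^ m * k (lam * w) = k w * A.divDiff (F w) (G w) := by
    filter_upwards [self_mem_nhdsWithin, nhdsWithin_le_nhds (hlam.eventually hHk),
      nhdsWithin_le_nhds hHk] with w hw hlw hw'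
    have := hrec w
    rw [hlw, hw', mul_pow] at this
    exact mul_left_cancel₀ (pow_ne_zero m hw) (by linear_combination this)
  have hkl : ContinuousAt (fun w => k (lam * w)) 0 :=
    hk.continuousAt.comp_of_eq (continuous_const_mul lam).continuousAt (mul_zero lam)
  have h0 := ((continuousAt_const.mul hkl).eventuallyEq_nhds_iff_eventuallyEq_nhdsNE
    (hk.continuousAt.mul hE)).1 hlimit |>.self_of_nhds
  simp only [Pi.mul_apply, mul_zero] at h0
  rw [← hFG, A.divDiff_self] at h0
  exact mul_right_cancel₀ hk0 (by rw [h0, mul_comm])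

theorem eq_of_lt_analyticOrderAt_sub {A : ℂ[X]} {F G : ℂ → ℂ} {lam : ℂ} {d : ℕ}
    (hlam : 1 < ‖lam‖) (hF : Differentiable ℂ F) (hG : Differentiable ℂ G) (hFG : F 0 = G 0)
    (hFA : ∀ w, F (lam * w) = A.eval (F w)) (hGA : ∀ w, G (lam * w) = A.eval (G w))
    (hA : A.derivative.eval (F 0) = lam ^ d)
    (hlt : (d : ℕ∞) < analyticOrderAt (fun w => F w - G w) 0) : F = G := by
  have hH : Differentiable ℂ fun w => F w - G w := hF.sub hG
  by_cases htop : analyticOrderAt (fun w => F w - G w) 0 = ⊤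
  · funext w
    have := (AnalyticOnNhd.analyticOrderAt_eq_top_iff_eq_zero 0 fun z => hH.analyticAt z).1 htop
    simpa [sub_eq_zero] using congrFun this w
  obtain ⟨m, hm⟩ := ENat.ne_top_iff_exists.1 htop
  have hpow := pow_eq_derivative_eval_of_analyticOrderAt_sub (hH.analyticAt 0)
    hF.continuous.continuousAt hG.continuous.continuousAt hFG hFA hGA hm.symm
  rw [hA] at hpow
  have hmd : m = d := pow_right_injective₀ (zero_lt_one.trans hlam) hlam.ne' <| by
    simp only [← norm_pow, hpow]
  rw [← hm, hmd] at hlt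
  exact absurd hlt (lt_irrefl _)

theorem lt_analyticOrderAt_comp_mul_sub {𝕜 : Type*} [NontriviallyNormedField 𝕜] {f : 𝕜 → 𝕜}
    (hf : AnalyticAt 𝕜 f 0) {d : ℕ} (hd : d ≤ analyticOrderAt (fun w => f w - f 0) 0)
    {ζ : 𝕜} (hζ : ζ ^ d = 1) : d < analyticOrderAt (fun w => f (ζ * w) - f w) 0 := by
  obtain ⟨g, hg, hfg⟩ := (natCast_le_analyticOrderAt (by fun_prop)).1 hd
  simp only [sub_zero, smul_eq_mul] at hfg
  have hζw : Tendsto (ζ * ·) (𝓝 0) (𝓝 0) := by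
    simpa using (continuous_const_mul ζ).tendsto 0
  have hgζ : AnalyticAt 𝕜 (fun w => g (ζ * w) - g w) 0 :=
    (hg.comp_of_eq (analyticAt_const.mul analyticAt_id) (mul_zero ζ)).sub hg
  have hH : (fun w => f (ζ * w) - f w) =ᶠ[𝓝 0] (· - 0) ^ d * fun w => g (ζ * w) - g w := by
    filter_upwards [hζw.eventually hfg, hfg] with w h1 h2
    simp only [Pi.mul_apply, Pi.pow_apply, sub_zero]
    rw [mul_pow, hζ, one_mul] at h1
    linear_combination h1 - h2
  have hpos : analyticOrderAt (fun w => g (ζ * w) - g w) 0 ≠ 0 :=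
    analyticOrderAt_ne_zero.2 ⟨hgζ, by simp⟩
  rw [analyticOrderAt_congr hH, analyticOrderAt_mul (by fun_prop) hgζ,
    analyticOrderAt_centeredMonomial]
  simpa using (ENat.add_lt_add_iff_left (ENat.natCast_ne_top d)).2 (pos_iff_ne_zero.2 hpos)

theorem iteratedDeriv_eq_zero_of_comp_mul_eq {𝕜 : Type*} [NontriviallyNormedField 𝕜]
    {f : 𝕜 → 𝕜} {n : ℕ} (hf : ContDiff 𝕜 n f) {ζ : 𝕜} (hζ : ζ ^ n ≠ 1)
    (hinv : ∀ z, f (ζ * z) = f z) : iteratedDeriv n f 0 = 0 := by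
  have h := congrFun (iteratedDeriv_comp_const_mul hf ζ) 0
  simp only [hinv, mul_zero] at h
  have : (ζ ^ n - 1) * iteratedDeriv n f 0 = 0 := by linear_combination -h
  exact (mul_eq_zero.1 this).resolve_left (sub_ne_zero.2 hζ)

theorem radius_ofScalars_comp_mul_eq_top {a : ℕ → ℂ} (ha : ∀ z, Summable fun n => a n * z ^ n)
    {d : ℕ} (hd : 0 < d) : (FormalMultilinearSeries.ofScalars ℂ fun k => a (d * k)).radius = ⊤ := by
  refine ENNReal.eq_top_of_forall_nnreal_le fun r => ?_
  obtain ⟨s, hs⟩ : ∃ s : NNReal, s ^ d = r := ⟨_, NNReal.rpow_inv_natCast_pow r hd.ne'⟩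
  have hterm := (ha (s : ℂ)).tendsto_atTop_zero.norm.comp
    (tendsto_id.const_mul_atTop' hd : Tendsto (fun k : ℕ => d * k) atTop atTop)
  refine FormalMultilinearSeries.le_radius_of_tendsto _ (l := 0) ?_
  convert hterm using 2 with k
  · simp [pow_mul, ← hs]
  · simp

theorem exists_differentiable_comp_pow_eq {f : ℂ → ℂ} (hf : Differentiable ℂ f) {d : ℕ}
    (hd : 0 < d) {ζ : ℂ} (hζ : IsPrimitiveRoot ζ d) (hinv : ∀ z, f (ζ * z) = f z) :
    ∃ F : ℂ → ℂ, Differentiable ℂ F ∧ ∀ z, f z = F (z ^ d) := by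
  set a : ℕ → ℂ := fun n => (n.factorial : ℂ)⁻¹ * iteratedDeriv n f 0
  have hsum : ∀ z, HasSum (fun n => a n * z ^ n) (f z) := fun z => by
    have h := Complex.hasSum_taylorSeries_of_entire hf 0 z
    simp only [sub_zero, smul_eq_mul] at h
    exact h.congr_fun fun n => by ring
  have ha : ∀ n, ¬ d ∣ n → a n = 0 := fun n hn => by
    simp only [a, iteratedDeriv_eq_zero_of_comp_mul_eq (hf.contDiff (n := n))
      (mt (hζ.pow_eq_one_iff_dvd n).1 hn) hinv, mul_zero]
  set p := FormalMultilinearSeries.ofScalars ℂ fun k => a (d * k)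
  have hp : p.radius = ⊤ := radius_ofScalars_comp_mul_eq_top (fun z => (hsum z).summable) hd
  refine ⟨p.sum, fun w => ((p.hasFPowerSeriesOnBall (by simp [hp])).analyticAt_of_mem
    (by simp [hp])).differentiableAt, fun z => ?_⟩
  have hinj : Function.Injective (d * ·) := fun _ _ h => Nat.eq_of_mul_eq_mul_left hd h
  have hsub := (hinj.hasSum_iff fun n hn => ?_).2 (hsum z)
  · rw [← hsub.tsum_eq]
    refine Eq.trans ?_ (FormalMultilinearSeries.ofScalars_sum_eq (fun k => a (d * k)) (z ^ d)).symm
    simp [pow_mul]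
  · rw [ha n fun ⟨k, hk⟩ => hn ⟨k, hk.symm⟩, zero_mul]

theorem deriv_ne_zero_of_analyticOrderAt_comp_pow {𝕜 : Type*} [NontriviallyNormedField 𝕜]
    [CharZero 𝕜] [CompleteSpace 𝕜] {F : 𝕜 → 𝕜} (hF : AnalyticAt 𝕜 F 0) {d : ℕ} (hd : 0 < d)
    (h : analyticOrderAt (fun z => F (z ^ d) - F 0) 0 = d) : deriv F 0 ≠ 0 := by
  have hpow0 : (0 : 𝕜) ^ d = 0 := zero_pow hd.ne'
  have hcomp := AnalyticAt.analyticOrderAt_comp (f := fun w => F w - F 0) (g := (· ^ d))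
    (by rw [hpow0]; fun_prop) (by fun_prop) (z₀ := 0)
  have hmono : analyticOrderAt (fun z : 𝕜 => z ^ d) 0 = d := by
    convert analyticOrderAt_centeredMonomial (z₀ := (0 : 𝕜)) (n := d) using 2
    ext; simp
  simp only [Function.comp_def, hpow0, h, sub_zero, hmono] at hcomp
  have hone : analyticOrderAt (fun w => F w - F 0) 0 = 1 := by
    generalize analyticOrderAt (fun w => F w - F 0) 0 = o at hcomp
    cases o with
    | top => simp [hd.ne'] at hcomp
    | coe o =>
      norm_cast at hcomp ⊢
      exact Nat.eq_of_mul_eq_mul_right hd (by rw [one_mul, ← hcomp])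
  rw [← hF.analyticOrderAt_deriv_add_one] at hone
  exact hF.deriv.analyticOrderAt_eq_zero.1 (by simpa using hone)

theorem polyOrd_pos {X : ℂ[X]} (hX : 0 < X.natDegree) (z : ℂ) : 0 < polyOrd X z :=
  (rootMultiplicity_pos (sub_C_eval_ne_zero hX z)).2 (by simp [IsRoot])

theorem analyticOrderAt_eval_comp_sub {P : ℂ → ℂ} (hP : AnalyticAt ℂ P 0) (hP' : deriv P 0 ≠ 0)
    {X : ℂ[X]} (hX : 0 < X.natDegree) :
    analyticOrderAt (fun z => X.eval (P z) - X.eval (P 0)) 0 = polyOrd X (P 0) := by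
  have h := analyticOrderAt_comp_of_deriv_ne_zero
    (f := fun w => (X - C (X.eval (P 0))).eval w) hP hP'
  rw [analyticOrderAt_eval (sub_C_eval_ne_zero hX _)] at h
  simpa [Function.comp_def, polyOrd] using h

theorem stmt17_general (A B : Polynomial ℂ)
    (X : Polynomial ℂ) (hX : 0 < X.natDegree)
    (hsemi : A.comp X = X.comp B)
    (z0 lam0 : ℂ) (hfix : B.eval z0 = z0)
    (hrep : 1 < ‖lam0‖)
    (PB : ℂ → ℂ) (hPB : IsPoincare B z0 lam0 PB)
    (d : ℕ) (hd : d = polyOrd X z0)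
    (z1 lam1 : ℂ) (hz1 : z1 = X.eval z0) (hlam1 : lam1 = lam0 ^ d) :
    A.eval z1 = z1 ∧ A.derivative.eval z1 = lam1 ∧ 1 < ‖lam1‖ ∧
    ∃ PA : ℂ → ℂ, IsPoincare A z1 lam1 PA ∧
      ∀ z : ℂ, X.eval (PB z) = PA (z ^ d) := by
  obtain ⟨hPB, hPB0, hPB', hPBB⟩ := hPB
  have hd0 : 0 < d := hd ▸ polyOrd_pos hX z0
  set Q : ℂ → ℂ := fun z => X.eval (PB z)
  have hQ : Differentiable ℂ Q := X.differentiable.comp hPB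
  have hQA (z : ℂ) : Q (lam0 * z) = A.eval (Q z) := by
    simp only [Q, hPBB, ← eval_comp, hsemi]
  have hQ0 : Q 0 = z1 := by simp [Q, hPB0, hz1]
  have hz1A : A.eval z1 = z1 := by rw [hz1, ← eval_comp, hsemi, eval_comp, hfix]
  have hord : analyticOrderAt (fun z => Q z - Q 0) 0 = d := by
    simpa [Q, hPB0, hd] using analyticOrderAt_eval_comp_sub (hPB.analyticAt 0) hPB' hX
  have hA' : A.derivative.eval z1 = lam0 ^ d :=
    hQ0 ▸ (pow_eq_derivative_eval_of_analyticOrderAt_sub (G := fun _ => Q 0)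
      (hQ.analyticAt 0 |>.sub analyticAt_const) hQ.continuous.continuousAt continuousAt_const rfl
      hQA (fun _ => by rw [hQ0, hz1A]) hord).symm
  refine ⟨hz1A, hlam1 ▸ hA', hlam1 ▸ norm_pow lam0 d ▸ one_lt_pow₀ hrep hd0.ne', ?_⟩
  obtain ⟨ζ, hζ⟩ : ∃ ζ : ℂ, IsPrimitiveRoot ζ d := ⟨_, Complex.isPrimitiveRoot_exp d hd0.ne'⟩
  have hsym : (fun z => Q (ζ * z)) = Q :=
    eq_of_lt_analyticOrderAt_sub hrep (hQ.comp (differentiable_id.const_mul ζ)) hQ (by simp)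
      (fun w => by rw [mul_left_comm, hQA]) hQA (by simpa [hQ0] using hA')
      (lt_analyticOrderAt_comp_mul_sub (hQ.analyticAt 0) hord.ge hζ.pow_eq_one)
  obtain ⟨PA, hPA, hQPA⟩ := exists_differentiable_comp_pow_eq hQ hd0 hζ (congrFun hsym)
  have hPA0 : PA 0 = z1 := by rw [← hQ0, hQPA, zero_pow hd0.ne']
  refine ⟨PA, ⟨hPA, hPA0, deriv_ne_zero_of_analyticOrderAt_comp_pow (hPA.analyticAt 0) hd0 ?_,
    fun w => ?_⟩, hQPA⟩
  · simpa [← hQPA, hPA0, hQ0] using hord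
  · obtain ⟨y, rfl⟩ := IsAlgClosed.exists_pow_nat_eq w hd0
    rw [hlam1, ← mul_pow, ← hQPA, ← hQPA, hQA]

theorem stmt17 (A B : Polynomial ℂ) (hA : 2 ≤ A.natDegree) (hB : 2 ≤ B.natDegree)
    (X : Polynomial ℂ) (hX : 0 < X.natDegree)
    (hsemi : A.comp X = X.comp B)
    (z0 lam0 : ℂ) (hfix : B.eval z0 = z0) (hm0 : lam0 = B.derivative.eval z0)
    (hrep : 1 < ‖lam0‖)
    (PB : ℂ → ℂ) (hPB : IsPoincare B z0 lam0 PB)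
    (d : ℕ) (hd : d = polyOrd X z0)
    (z1 lam1 : ℂ) (hz1 : z1 = X.eval z0) (hlam1 : lam1 = lam0 ^ d) :
    A.eval z1 = z1 ∧ A.derivative.eval z1 = lam1 ∧ 1 < ‖lam1‖ ∧
    ∃ PA : ℂ → ℂ, IsPoincare A z1 lam1 PA ∧
      ∀ z : ℂ, X.eval (PB z) = PA (z ^ d) :=
  stmt17_general A B X hX hsemi z0 lam0 hfix hrep PB hPB d hd z1 lam1 hz1 hlam1
end
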